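/- If a ground program Σ with negation is stratifiable — i.e., there is a function s from atoms to ℕ such that for every rule, s(head) ≥ s(a) for all a in the positive body and s(head) > s(a) for all a in the negative body — and each stratum is finite or each stratum's negation-free residual program has a least model, then Σ has exactly one stable model. -/
import Mathlib


/-- An interpretation `I` is a model of a definite (negation-free) ground program. -/
def IsModelOf {U : Type*} (P : Set (Set U × U)) (I : Set U) : Prop :=
  ∀ r ∈ P, r.1 ⊆ I → r.2 ∈ I

/-- The Gelfond–Lifschitz reduct of a ground program with negation w.r.t. `I`:
keep rules whose negative body is disjoint from `I`, dropping the negative literals. -/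
def reduct {U : Type*} (Sg : Set (Set U × Set U × U)) (I : Set U) :
    Set (Set U × U) :=
  {r | ∃ Bm : Set U, (r.1, Bm, r.2) ∈ Sg ∧ Bm ∩ I = ∅}

/-- `I` is a stable model: it is the least model of the reduct `Σ^I`. -/
def IsStable {U : Type*} (Sg : Set (Set U × Set U × U)) (I : Set U) : Prop :=
  IsModelOf (reduct Sg I) I ∧ ∀ J : Set U, IsModelOf (reduct Sg I) J → I ⊆ J

namespace Stmt14

variable {U : Type*}

/-- Least prefixed point of a set operator. -/
def lfpSet (F : Set U → Set U) : Set U := ⋂₀ {X | F X ⊆ X}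

lemma lfpSet_le {F : Set U → Set U} {X : Set U} (h : F X ⊆ X) : lfpSet F ⊆ X :=
  Set.sInter_subset_of_mem h

lemma lfpSet_pre {F : Set U → Set U} (mono : ∀ ⦃X Y : Set U⦄, X ⊆ Y → F X ⊆ F Y) :
    F (lfpSet F) ⊆ lfpSet F := fun a ha =>
  Set.mem_sInter.2 fun X hX => hX (mono (lfpSet_le hX) ha)

/-- One-step operator at stratum `n`, with lower strata fixed to `L`. -/
def Fop (Sg : Set (Set U × Set U × U)) (s : U → ℕ) (n : ℕ) (L X : Set U) : Set U :=
  {a | s a = n ∧ ∃ Bp Bm : Set U, (Bp, Bm, a) ∈ Sg ∧ Bp ⊆ L ∪ X ∧ Bm ∩ L = ∅}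

lemma Fop_mono (Sg : Set (Set U × Set U × U)) (s : U → ℕ) (n : ℕ) (L : Set U) :
    ∀ ⦃X Y : Set U⦄, X ⊆ Y → Fop Sg s n L X ⊆ Fop Sg s n L Y := by
  intro X Y hXY a ha
  obtain ⟨hs, Bp, Bm, hr, hBp, hBm⟩ := ha
  exact ⟨hs, Bp, Bm, hr, hBp.trans (Set.union_subset_union_right _ hXY), hBm⟩

/-- The true atoms of stratum `n`. -/
def stage (Sg : Set (Set U × Set U × U)) (s : U → ℕ) (n : ℕ) : Set U :=
  lfpSet (Fop Sg s n (⋃ m, ⋃ _ : m < n, stage Sg s m))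
termination_by n

/-- The true atoms of strata `< n`. -/
def Lev (Sg : Set (Set U × Set U × U)) (s : U → ℕ) (n : ℕ) : Set U :=
  ⋃ m, ⋃ _ : m < n, stage Sg s m

lemma stage_def (Sg : Set (Set U × Set U × U)) (s : U → ℕ) (n : ℕ) :
    stage Sg s n = lfpSet (Fop Sg s n (Lev Sg s n)) := by
  rw [stage]; rfl

lemma mem_Lev {Sg : Set (Set U × Set U × U)} {s : U → ℕ} {n : ℕ} {a : U} :
    a ∈ Lev Sg s n ↔ ∃ m, m < n ∧ a ∈ stage Sg s m := by
  simp [Lev]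

lemma stage_strat {Sg : Set (Set U × Set U × U)} {s : U → ℕ} {n : ℕ} {a : U}
    (ha : a ∈ stage Sg s n) : s a = n := by
  rw [stage_def] at ha
  exact lfpSet_le (F := Fop Sg s n (Lev Sg s n)) (X := {a | s a = n})
    (fun b hb => hb.1) ha

/-- The intended stable model. -/
def M (Sg : Set (Set U × Set U × U)) (s : U → ℕ) : Set U := ⋃ n, stage Sg s n

lemma mem_M {Sg : Set (Set U × Set U × U)} {s : U → ℕ} {a : U} :
    a ∈ M Sg s ↔ a ∈ stage Sg s (s a) := by
  constructor
  · rintro ha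
    obtain ⟨n, hn⟩ := Set.mem_iUnion.1 ha
    have h := stage_strat hn
    rw [h]; exact hn
  · intro h; exact Set.mem_iUnion.2 ⟨s a, h⟩

lemma Lev_eq {Sg : Set (Set U × Set U × U)} {s : U → ℕ} {n : ℕ} {a : U} :
    a ∈ Lev Sg s n ↔ a ∈ M Sg s ∧ s a < n := by
  constructor
  · intro h
    obtain ⟨m, hm, hs⟩ := mem_Lev.1 h
    have := stage_strat hs
    exact ⟨Set.mem_iUnion.2 ⟨m, hs⟩, this ▸ hm⟩
  · rintro ⟨hM, hlt⟩
    exact mem_Lev.2 ⟨s a, hlt, mem_M.1 hM⟩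

end Stmt14

open Stmt14 in
/-- A stratifiable ground program with negation (with strata given by
`s`, each stratum finite, or every residual negation-free program having a least
model) has exactly one stable model. -/
theorem stmt_14 {U : Type*} (Sg : Set (Set U × Set U × U)) (s : U → ℕ)
    (hstrat : ∀ σ ∈ Sg,
      (∀ a ∈ σ.1, s a ≤ s σ.2.2) ∧ (∀ a ∈ σ.2.1, s a < s σ.2.2))
    (hside : (∀ n : ℕ, {a : U | s a = n}.Finite) ∨
      (∀ I : Set U, ∃ J : Set U, IsModelOf (reduct Sg I) J ∧
        ∀ K : Set U, IsModelOf (reduct Sg I) K → J ⊆ K)) :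
    ∃! I : Set U, IsStable Sg I := by
  classical
  set MM := M Sg s with hMM
  -- MM is a model of its reduct
  have hmodel : IsModelOf (reduct Sg MM) MM := by
    rintro ⟨Bp, a⟩ ⟨Bm, hr, hdisj⟩ hBp
    set n := s a with hn
    have key : a ∈ Fop Sg s n (Lev Sg s n) (stage Sg s n) := by
      refine ⟨hn.symm, Bp, Bm, hr, ?_, ?_⟩
      · intro b hb
        have hble : s b ≤ n := (hstrat _ hr).1 b hb
        have hbM : b ∈ stage Sg s (s b) := mem_M.1 (hBp hb)
        rcases lt_or_eq_of_le hble with hlt | heq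
        · exact Or.inl (mem_Lev.2 ⟨s b, hlt, hbM⟩)
        · exact Or.inr (heq ▸ hbM)
      · apply Set.eq_empty_iff_forall_notMem.2
        intro b hb
        exact Set.eq_empty_iff_forall_notMem.1 hdisj b ⟨hb.1, (Lev_eq.1 hb.2).1⟩
    have : a ∈ stage Sg s n := by
      rw [stage_def]
      exact lfpSet_pre (Fop_mono Sg s n _) (by rwa [← stage_def])
    exact Set.mem_iUnion.2 ⟨n, this⟩
  -- MM is least among models of its reduct
  have hleast : ∀ J : Set U, IsModelOf (reduct Sg MM) J → MM ⊆ J := by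
    intro J hJ
    have key : ∀ n : ℕ, stage Sg s n ⊆ J := by
      intro n
      induction n using Nat.strong_induction_on with
      | _ n ih =>
        rw [stage_def]
        refine lfpSet_le (X := J ∩ {a | s a = n}) ?_ |>.trans Set.inter_subset_left
        rintro a ⟨hs, Bp, Bm, hr, hBp, hBm⟩
        have hBmM : Bm ∩ MM = ∅ := by
          apply Set.eq_empty_iff_forall_notMem.2
          rintro b ⟨hb1, hb2⟩
          have hblt : s b < n := hs ▸ (hstrat _ hr).2 b hb1
          exact Set.eq_empty_iff_forall_notMem.1 hBm b ⟨hb1, Lev_eq.2 ⟨hb2, hblt⟩⟩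
        have hBpJ : Bp ⊆ J := by
          intro b hb
          rcases hBp hb with hL | hX
          · obtain ⟨m, hm, hsb⟩ := mem_Lev.1 hL
            exact ih m hm hsb
          · exact hX.1
        exact ⟨hJ (Bp, a) ⟨Bm, hr, hBmM⟩ hBpJ, hs⟩
    intro a ha
    obtain ⟨n, hn⟩ := Set.mem_iUnion.1 ha
    exact key n hn
  refine ⟨MM, ⟨hmodel, hleast⟩, ?_⟩
  -- uniqueness
  intro I hI
  have key : ∀ n : ℕ, ∀ a : U, s a = n → (a ∈ I ↔ a ∈ stage Sg s n) := by
    intro n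
    induction n using Nat.strong_induction_on with
    | _ n ih =>
      -- first: stage n ⊆ I
      have hLevI : ∀ b, b ∈ Lev Sg s n → b ∈ I := by
        intro b hb
        obtain ⟨m, hm, hsb⟩ := mem_Lev.1 hb
        exact (ih m hm b (stage_strat hsb)).2 hsb
      have hILev : ∀ b, b ∈ I → s b < n → b ∈ Lev Sg s n := by
        intro b hb hlt
        exact mem_Lev.2 ⟨s b, hlt, (ih (s b) hlt b rfl).1 hb⟩
      have half1 : stage Sg s n ⊆ I ∩ {a | s a = n} := by
        rw [stage_def]
        apply lfpSet_le
        rintro a ⟨hs, Bp, Bm, hr, hBp, hBm⟩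
        have hBmI : Bm ∩ I = ∅ := by
          apply Set.eq_empty_iff_forall_notMem.2
          rintro b ⟨hb1, hb2⟩
          have hblt : s b < n := hs ▸ (hstrat _ hr).2 b hb1
          exact Set.eq_empty_iff_forall_notMem.1 hBm b ⟨hb1, hILev b hb2 hblt⟩
        have hBpI : Bp ⊆ I := by
          intro b hb
          rcases hBp hb with hL | hX
          · exact hLevI b hL
          · exact hX.1
        exact ⟨hI.1 (Bp, a) ⟨Bm, hr, hBmI⟩ hBpI, hs⟩
      -- second: I ∩ {s = n} ⊆ stage n, using leastness of I
      set J : Set U := (I \ {a | s a = n}) ∪ stage Sg s n with hJdef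
      have hJI : J ⊆ I := by
        rintro b (hb | hb)
        · exact hb.1
        · exact (half1 hb).1
      have hJmodel : IsModelOf (reduct Sg I) J := by
        rintro ⟨Bp, a⟩ ⟨Bm, hr, hdisj⟩ hBp
        by_cases hsa : s a = n
        · -- show a ∈ stage n
          have : a ∈ Fop Sg s n (Lev Sg s n) (stage Sg s n) := by
            refine ⟨hsa, Bp, Bm, hr, ?_, ?_⟩
            · intro b hb
              rcases hBp hb with hbI | hbS
              · have hble : s b ≤ n := hsa ▸ (hstrat _ hr).1 b hb
                have hblt : s b < n := lt_of_le_of_ne hble hbI.2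
                exact Or.inl (hILev b hbI.1 hblt)
              · exact Or.inr hbS
            · apply Set.eq_empty_iff_forall_notMem.2
              rintro b ⟨hb1, hb2⟩
              exact Set.eq_empty_iff_forall_notMem.1 hdisj b ⟨hb1, hLevI b hb2⟩
          have : a ∈ stage Sg s n := by
            rw [stage_def]
            exact lfpSet_pre (Fop_mono Sg s n _) (by rwa [← stage_def])
          exact Or.inr this
        · have hBpI : Bp ⊆ I := fun b hb => hJI (hBp hb)
          have haI : a ∈ I := hI.1 (Bp, a) ⟨Bm, hr, hdisj⟩ hBpI
          exact Or.inl ⟨haI, hsa⟩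
      have hIJ : I ⊆ J := hI.2 J hJmodel
      intro a hsa
      constructor
      · intro haI
        rcases hIJ haI with h | h
        · exact absurd hsa h.2
        · exact h
      · intro h
        exact (half1 h).1
  apply Set.eq_of_subset_of_subset
  · intro a ha
    exact Set.mem_iUnion.2 ⟨s a, (key (s a) a rfl).1 ha⟩
  · intro a ha
    obtain ⟨n, hn⟩ := Set.mem_iUnion.1 ha
    exact (key n a (stage_strat hn)).2 hn
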